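/- arXiv:1712.01665 — 2 statements merged into one kernel-verified Lean document; each statement's English description precedes it below -/
import Mathlib

section
/- The Gaussian mechanism with noise variance τ and L2-sensitivity Δ satisfies (Δ²/(2τ))-zCDP; that is, for all adjacent databases D, D' and all α ∈ (1, ∞), the Rényi divergence of order α between N(f(D), τ·I) and N(f(D'), τ·I) is at most α · Δ²/(2τ). -/
open MeasureTheory ProbabilityTheory Real

/-!
Completing the square, `p_μ · (p_μ / p_μ')^(α-1)` is `exp (α(α-1)(μ-μ')²/(2τ))` times the
Gaussian density centred at `μ + (α-1)(μ-μ')`, so its integral is that constant. Product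
densities factor coordinatewise, hence the order-`α` Rényi divergence between `N(μ, τI)` and
`N(μ', τI)` is exactly `α‖μ - μ'‖²/(2τ)`, which the sensitivity bound turns into `αΔ²/(2τ)`.
-/

theorem Finset.prod_mul_rpow_prod_div_prod {ι : Type*} (s : Finset ι) {p q : ι → ℝ}
    (hp : ∀ i ∈ s, 0 ≤ p i) (hq : ∀ i ∈ s, 0 ≤ q i) (r : ℝ) :
    (∏ i ∈ s, p i) * ((∏ i ∈ s, p i) / ∏ i ∈ s, q i) ^ r = ∏ i ∈ s, p i * (p i / q i) ^ r := by
  rw [← Finset.prod_div_distrib,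
    ← Real.finsetProd_rpow _ _ fun i hi => div_nonneg (hp i hi) (hq i hi),
    Finset.prod_mul_distrib]

section Gaussian

variable {τ : NNReal}

theorem gaussianPDFReal_mul_div_rpow (hτ : τ ≠ 0) (μ μ' α x : ℝ) :
    gaussianPDFReal μ τ x * (gaussianPDFReal μ τ x / gaussianPDFReal μ' τ x) ^ (α - 1) =
      exp (α * (α - 1) * (μ - μ') ^ 2 / (2 * τ)) *
        gaussianPDFReal (μ + (α - 1) * (μ - μ')) τ x := by
  have hτ' : (τ : ℝ) ≠ 0 := NNReal.coe_ne_zero.mpr hτ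
  have hc : (√(2 * π * τ))⁻¹ ≠ 0 := by positivity
  have complete_square :
      -(x - μ) ^ 2 / (2 * τ) + (-(x - μ) ^ 2 / (2 * τ) - -(x - μ') ^ 2 / (2 * τ)) * (α - 1) =
        α * (α - 1) * (μ - μ') ^ 2 / (2 * τ) +
          -(x - (μ + (α - 1) * (μ - μ'))) ^ 2 / (2 * τ) := by
    field_simp
    ring
  simp only [gaussianPDFReal]
  rw [mul_div_mul_left _ _ hc, ← exp_sub, ← exp_mul, mul_assoc, ← exp_add, complete_square,
    exp_add]
  ring

theorem integral_gaussianPDFReal_mul_div_rpow (hτ : τ ≠ 0) (μ μ' α : ℝ) :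
    ∫ x, gaussianPDFReal μ τ x * (gaussianPDFReal μ τ x / gaussianPDFReal μ' τ x) ^ (α - 1) =
      exp (α * (α - 1) * (μ - μ') ^ 2 / (2 * τ)) := by
  simp_rw [gaussianPDFReal_mul_div_rpow hτ μ μ' α]
  rw [integral_const_mul, integral_gaussianPDFReal_eq_one _ hτ, mul_one]

theorem integral_prod_gaussianPDFReal_mul_div_rpow {ι : Type*} [Fintype ι] (hτ : τ ≠ 0)
    (μ μ' : ι → ℝ) (α : ℝ) :
    ∫ x : ι → ℝ, (∏ i, gaussianPDFReal (μ i) τ (x i)) *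
        ((∏ i, gaussianPDFReal (μ i) τ (x i)) / ∏ i, gaussianPDFReal (μ' i) τ (x i)) ^ (α - 1) =
      exp (α * (α - 1) * (∑ i, (μ i - μ' i) ^ 2) / (2 * τ)) := by
  have hpdf : ∀ m y, 0 ≤ gaussianPDFReal m τ y := fun m y => gaussianPDFReal_nonneg m τ y
  simp_rw [Finset.prod_mul_rpow_prod_div_prod _ (fun i _ => hpdf _ _) (fun i _ => hpdf _ _)]
  rw [integral_fintype_prod_volume_eq_prod
      (fun i y => gaussianPDFReal (μ i) τ y *
        (gaussianPDFReal (μ i) τ y / gaussianPDFReal (μ' i) τ y) ^ (α - 1))]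
  simp_rw [integral_gaussianPDFReal_mul_div_rpow hτ, ← exp_sum, Finset.mul_sum, Finset.sum_div]

theorem renyiDiv_gaussian_prod_eq {ι : Type*} [Fintype ι] (hτ : τ ≠ 0) (μ μ' : ι → ℝ)
    {α : ℝ} (hα : α ≠ 1) :
    (α - 1)⁻¹ * log (∫ x : ι → ℝ, (∏ i, gaussianPDFReal (μ i) τ (x i)) *
        ((∏ i, gaussianPDFReal (μ i) τ (x i)) / ∏ i, gaussianPDFReal (μ' i) τ (x i)) ^ (α - 1)) =
      α * (∑ i, (μ i - μ' i) ^ 2) / (2 * τ) := by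
  have hα' : α - 1 ≠ 0 := sub_ne_zero.mpr hα
  rw [integral_prod_gaussianPDFReal_mul_div_rpow hτ, log_exp]
  field_simp

end Gaussian

/-- The Gaussian mechanism with noise variance `τ` and L2-sensitivity `Δ`
satisfies `(Δ²/(2τ))`-zCDP: for all adjacent databases `d, d'` and all
`α ∈ (1, ∞)`, the Rényi divergence of order `α` between `N(f(d), τ I)` and
`N(f(d'), τ I)` is at most `α Δ²/(2τ)`. -/
theorem gaussian_mechanism_zCDP {D : Type*} (adj : D → D → Prop) (n : ℕ)
    (f : D → Fin n → ℝ) (Δ : ℝ) (τ : NNReal) (hτ : 0 < (τ : ℝ))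
    (hsens : ∀ d d', adj d d' → Real.sqrt (∑ i, (f d i - f d' i) ^ 2) ≤ Δ)
    (d d' : D) (hadj : adj d d') (α : ℝ) (hα : 1 < α) :
    (α - 1)⁻¹ * Real.log (∫ x : Fin n → ℝ,
        (∏ i, gaussianPDFReal (f d i) τ (x i)) *
          ((∏ i, gaussianPDFReal (f d i) τ (x i)) /
            (∏ i, gaussianPDFReal (f d' i) τ (x i))) ^ (α - 1))
      ≤ α * Δ ^ 2 / (2 * τ) := by
  have hτ' : τ ≠ 0 := by exact_mod_cast hτ.ne'
  have hsq : ∑ i, (f d i - f d' i) ^ 2 ≤ Δ ^ 2 := (sqrt_le_iff.mp (hsens d d' hadj)).2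
  rw [renyiDiv_gaussian_prod_eq hτ' _ _ hα.ne']
  have hα₀ : 0 ≤ α := by linarith
  gcongr
end

section
/- Let A be an (ε, δ)-DP mechanism and let A_ν be the mechanism that first samples a subset of the data by including each record independently with probability ν (with ν > δ) and then runs A on the sample. Then A_ν satisfies (log(1 + ν(e^ε − 1)), νδ)-differential privacy. -/
open MeasureTheory Real

/-- Add/remove-one adjacency on databases modelled as finite sets of records. -/
def AdjAddRemove {X : Type*} [DecidableEq X] (d d' : Finset X) : Prop :=
  (∃ x ∉ d, d' = insert x d) ∨ (∃ x ∉ d', d = insert x d')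

/-- `(ε, δ)`-differential privacy of a mechanism `A`. -/
def DiffPrivate {D Ω : Type*} [MeasurableSpace Ω] (adj : D → D → Prop)
    (A : D → Measure Ω) (ε δ : ℝ) : Prop :=
  ∀ d d', adj d d' → ∀ s : Set Ω, MeasurableSet s →
    (A d s).toReal ≤ Real.exp ε * (A d' s).toReal + δ

/-- The subsampled mechanism: include each record of `d` independently with
probability `ν`, then run `A` on the sample. -/
noncomputable def subsample {X Ω : Type*} [DecidableEq X] [MeasurableSpace Ω]
    (A : Finset X → Measure Ω) (ν : ℝ) (d : Finset X) : Measure Ω :=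
  ∑ s ∈ d.powerset,
    (ENNReal.ofReal (ν ^ s.card * (1 - ν) ^ (d.card - s.card))) • A s

section Aux

variable {X : Type*} [DecidableEq X]

lemma aux_sum_powerset_insert {x : X} {d : Finset X} (hx : x ∉ d) (f : Finset X → ℝ) :
    ∑ S ∈ (insert x d).powerset, f S
      = ∑ S ∈ d.powerset, f S + ∑ S ∈ d.powerset, f (insert x S) := by
  rw [Finset.powerset_insert, Finset.sum_union, Finset.sum_image]
  · intro S hS S' hS' h
    have hxS : x ∉ S := fun hmem => hx (Finset.mem_powerset.mp hS hmem)
    have hxS' : x ∉ S' := fun hmem => hx (Finset.mem_powerset.mp hS' hmem)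
    rw [← Finset.erase_insert hxS, h, Finset.erase_insert hxS']
  · rw [Finset.disjoint_left]
    intro S hS hS'
    obtain ⟨T, _, rfl⟩ := Finset.mem_image.mp hS'
    exact hx (Finset.mem_powerset.mp hS (Finset.mem_insert_self x T))

lemma aux_sum_w {ν : ℝ} (d : Finset X) :
    ∑ S ∈ d.powerset, ν ^ S.card * (1 - ν) ^ (d.card - S.card) = 1 := by
  induction d using Finset.induction with
  | empty => simp
  | @insert x d hx ih =>
    rw [aux_sum_powerset_insert hx]
    have h1 : ∑ S ∈ d.powerset, ν ^ S.card * (1 - ν) ^ ((insert x d).card - S.card)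
        = (1 - ν) * ∑ S ∈ d.powerset, ν ^ S.card * (1 - ν) ^ (d.card - S.card) := by
      rw [Finset.mul_sum]
      refine Finset.sum_congr rfl fun S hS => ?_
      have hle : S.card ≤ d.card := Finset.card_le_card (Finset.mem_powerset.mp hS)
      rw [Finset.card_insert_of_notMem hx, Nat.succ_sub hle, pow_succ]
      ring
    have h2 : ∑ S ∈ d.powerset, ν ^ (insert x S).card * (1 - ν) ^ ((insert x d).card - (insert x S).card)
        = ν * ∑ S ∈ d.powerset, ν ^ S.card * (1 - ν) ^ (d.card - S.card) := by
      rw [Finset.mul_sum]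
      refine Finset.sum_congr rfl fun S hS => ?_
      have hxS : x ∉ S := fun hmem => hx (Finset.mem_powerset.mp hS hmem)
      rw [Finset.card_insert_of_notMem hx, Finset.card_insert_of_notMem hxS,
        Nat.succ_sub_succ, pow_succ]
      ring
    rw [h1, h2, ih]
    ring

lemma aux_subsample_toReal {Ω : Type*} [MeasurableSpace Ω]
    (A : Finset X → Measure Ω) (ν : ℝ) (hν0 : 0 < ν) (hν1 : ν < 1)
    (hprob : ∀ d, IsProbabilityMeasure (A d)) (d : Finset X) (s : Set Ω) :
    ((subsample A ν d) s).toReal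
      = ∑ S ∈ d.powerset, ν ^ S.card * (1 - ν) ^ (d.card - S.card) * (A S s).toReal := by
  rw [subsample, Measure.finset_sum_apply]
  rw [ENNReal.toReal_sum]
  · refine Finset.sum_congr rfl fun S _ => ?_
    rw [Measure.smul_apply, smul_eq_mul, ENNReal.toReal_mul, ENNReal.toReal_ofReal]
    exact mul_nonneg (pow_nonneg hν0.le _) (pow_nonneg (by linarith) _)
  · intro S _
    rw [Measure.smul_apply, smul_eq_mul]
    exact ENNReal.mul_ne_top ENNReal.ofReal_ne_top (measure_ne_top _ _)

end Aux

/-- Privacy amplification by subsampling: if `A` is `(ε, δ)`-DP (w.r.t.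
add/remove-one adjacency) and each record is sampled independently with
probability `ν > δ`, then the subsampled mechanism is
`(log(1 + ν(e^ε − 1)), ν δ)`-DP. -/
theorem privacy_amplification {X Ω : Type*} [DecidableEq X] [MeasurableSpace Ω]
    (A : Finset X → Measure Ω) (ε δ ν : ℝ) (hε : 0 < ε) (hδ : 0 ≤ δ)
    (hν0 : 0 < ν) (hν1 : ν < 1) (hνδ : δ < ν)
    (hprob : ∀ d, IsProbabilityMeasure (A d))
    (hDP : DiffPrivate AdjAddRemove A ε δ) :
    DiffPrivate AdjAddRemove (subsample A ν)
      (Real.log (1 + ν * (Real.exp ε - 1))) (ν * δ) := by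
  set E := Real.exp ε with hE
  have hE1 : 1 < E := by
    rw [hE, ← Real.exp_zero]
    exact Real.exp_lt_exp.mpr hε
  have hc0 : (0:ℝ) < 1 + ν * (E - 1) := by nlinarith
  have hexp : Real.exp (Real.log (1 + ν * (E - 1))) = 1 + ν * (E - 1) :=
    Real.exp_log hc0
  -- key inequality, proved for a fixed x ∉ d in both directions
  have key : ∀ (d : Finset X) (x : X), x ∉ d → ∀ s : Set Ω, MeasurableSet s →
      (((subsample A ν (insert x d)) s).toReal
          ≤ (1 + ν * (E - 1)) * ((subsample A ν d) s).toReal + ν * δ) ∧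
      (((subsample A ν d) s).toReal
          ≤ (1 + ν * (E - 1)) * ((subsample A ν (insert x d)) s).toReal + ν * δ) := by
    intro d x hx s hs
    set w : Finset X → ℝ := fun S => ν ^ S.card * (1 - ν) ^ (d.card - S.card) with hw
    have hwpos : ∀ S, 0 ≤ w S := fun S =>
      mul_nonneg (pow_nonneg hν0.le _) (pow_nonneg (by linarith) _)
    set T : ℝ := ∑ S ∈ d.powerset, w S * (A S s).toReal with hT
    set T' : ℝ := ∑ S ∈ d.powerset, w S * (A (insert x S) s).toReal with hT'
    have hTnn : 0 ≤ T := Finset.sum_nonneg fun S _ =>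
      mul_nonneg (hwpos S) ENNReal.toReal_nonneg
    have hT'nn : 0 ≤ T' := Finset.sum_nonneg fun S _ =>
      mul_nonneg (hwpos S) ENNReal.toReal_nonneg
    have hadj : ∀ S ∈ d.powerset, AdjAddRemove S (insert x S) := by
      intro S hS
      exact Or.inl ⟨x, fun hmem => hx (Finset.mem_powerset.mp hS hmem), rfl⟩
    have hsub : ((subsample A ν d) s).toReal = T :=
      aux_subsample_toReal A ν hν0 hν1 hprob d s
    have hsub' : ((subsample A ν (insert x d)) s).toReal = (1 - ν) * T + ν * T' := by
      rw [aux_subsample_toReal A ν hν0 hν1 hprob (insert x d) s,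
        aux_sum_powerset_insert hx]
      have h1 : ∑ S ∈ d.powerset,
          ν ^ S.card * (1 - ν) ^ ((insert x d).card - S.card) * (A S s).toReal
          = (1 - ν) * T := by
        rw [hT, Finset.mul_sum]
        refine Finset.sum_congr rfl fun S hS => ?_
        have hle : S.card ≤ d.card := Finset.card_le_card (Finset.mem_powerset.mp hS)
        rw [Finset.card_insert_of_notMem hx, Nat.succ_sub hle, hw, pow_succ]
        ring
      have h2 : ∑ S ∈ d.powerset,
          ν ^ (insert x S).card * (1 - ν) ^ ((insert x d).card - (insert x S).card)
            * (A (insert x S) s).toReal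
          = ν * T' := by
        rw [hT', Finset.mul_sum]
        refine Finset.sum_congr rfl fun S hS => ?_
        have hxS : x ∉ S := fun hmem => hx (Finset.mem_powerset.mp hS hmem)
        rw [Finset.card_insert_of_notMem hx, Finset.card_insert_of_notMem hxS,
          Nat.succ_sub_succ, hw, pow_succ]
        ring
      rw [h1, h2]
    -- group DP inequalities
    have hup : T' ≤ E * T + δ := by
      calc T' ≤ ∑ S ∈ d.powerset, w S * (E * (A S s).toReal + δ) := by
            refine Finset.sum_le_sum fun S hS => ?_
            exact mul_le_mul_of_nonneg_left
              (hDP (insert x S) S (Or.inr ⟨x, fun hmem => hx (Finset.mem_powerset.mp hS hmem), rfl⟩) s hs)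
              (hwpos S)
        _ = E * T + δ * ∑ S ∈ d.powerset, w S := by
            rw [hT, Finset.mul_sum, Finset.mul_sum, ← Finset.sum_add_distrib]
            exact Finset.sum_congr rfl fun S _ => by ring
        _ = E * T + δ := by
            simp only [hw]
            rw [aux_sum_w, mul_one]
    have hdown : T ≤ E * T' + δ := by
      calc T ≤ ∑ S ∈ d.powerset, w S * (E * (A (insert x S) s).toReal + δ) := by
            refine Finset.sum_le_sum fun S hS => ?_
            exact mul_le_mul_of_nonneg_left (hDP S (insert x S) (hadj S hS) s hs) (hwpos S)
        _ = E * T' + δ * ∑ S ∈ d.powerset, w S := by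
            rw [hT', Finset.mul_sum, Finset.mul_sum, ← Finset.sum_add_distrib]
            exact Finset.sum_congr rfl fun S _ => by ring
        _ = E * T' + δ := by
            simp only [hw]
            rw [aux_sum_w, mul_one]
    constructor
    · rw [hsub, hsub']
      nlinarith [mul_nonneg hν0.le hTnn]
    · rw [hsub, hsub']
      have hE0 : (0:ℝ) < E := lt_trans one_pos hE1
      nlinarith [mul_nonneg (mul_nonneg (mul_nonneg hν0.le (sub_nonneg.mpr hν1.le))
          (sq_nonneg (E - 1))) hTnn,
        mul_nonneg (mul_nonneg (mul_nonneg hν0.le hδ) (sub_nonneg.mpr hν1.le))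
          (sub_nonneg.mpr hE1.le),
        mul_nonneg (mul_nonneg hc0.le hν0.le) (sub_nonneg.mpr hdown)]
  intro d d' hadj s hs
  rw [hexp]
  rcases hadj with ⟨x, hx, rfl⟩ | ⟨x, hx, rfl⟩
  · exact (key d x hx s hs).2
  · exact (key d' x hx s hs).1
end
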